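/- Let Y be a closed subspace of a Banach space X. Then for every nonempty compact subset F of X, rad_{B_{Y⊥⊥}}(F) = rad_{B_Y}(F), i.e., the restricted Chebyshev radius of F with respect to the unit ball of Y⊥⊥ in X** equals its restricted Chebyshev radius with respect to the unit ball of Y in X. -/

import Mathlib

open Metric Set Pointwise

/-- `r(x,B) = sup_{b ∈ B} ‖x - b‖`. -/
noncomputable def chebR {X : Type*} [NormedAddCommGroup X] (x : X) (B : Set X) : ℝ :=
  ⨆ b : B, ‖x - (b : X)‖

/-- `rad_V(B) = inf_{v ∈ V} r(v,B)`, the restricted Chebyshev radius. -/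
noncomputable def chebRad {X : Type*} [NormedAddCommGroup X] (V B : Set X) : ℝ :=
  ⨅ v : V, chebR (v : X) B

/-- `cent_V(B)`, the set of restricted Chebyshev centers of `B` w.r.t. `V`. -/
noncomputable def chebCent {X : Type*} [NormedAddCommGroup X] (V B : Set X) : Set X :=
  {v ∈ V | chebR v B ≤ chebRad V B}

/-- `cent_V(B,δ) = {v ∈ V : r(v,B) ≤ rad_V(B) + δ}`. -/
noncomputable def chebCentA {X : Type*} [NormedAddCommGroup X] (V B : Set X) (δ : ℝ) : Set X :=
  {v ∈ V | chebR v B ≤ chebRad V B + δ}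

open NormedSpace in
/-- The double annihilator `Y⊥⊥` of `Y`, as a subset of the bidual `X**`. -/
def biann {X : Type*} [NormedAddCommGroup X] [NormedSpace ℝ X] (Y : Submodule ℝ X) :
    Set (StrongDual ℝ (StrongDual ℝ X)) :=
  {Φ | ∀ f : StrongDual ℝ X, (∀ y ∈ Y, f y = 0) → Φ f = 0}

/-!
If `Φ ∈ Y⊥⊥` lies in finitely many closed balls `B(aᵢ, ρᵢ)` of `X**` with centres in `X`, then
`Y` meets all the slightly larger balls `B(aᵢ, ρᵢ + ε)` of `X`. Otherwise Hahn–Banach separates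
the open box `∏ B(0, ρᵢ + ε)` in `X^ι` from the affine set `{(y - aᵢ)ᵢ : y ∈ Y}` by a functional
`(gᵢ)ᵢ`; then `∑ gᵢ` is bounded below on `Y`, so it lies in `Y⊥` and is killed by `Φ`, which makes
`∑ (Φ - aᵢ)(gᵢ)` at least the separating constant, while the box pushes it below.
Taking the unit ball around `0` together with balls of radius `r(Φ, F)` around an `ε`-net of `F`
gives `rad_{B_Y}(F) ≤ rad_{B_{Y⊥⊥}}(F)`; the reverse inequality holds because `X → X**` is an
isometry mapping `B_Y` into `B_{Y⊥⊥}`.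
-/

open NormedSpace

section ChebyshevRadius

variable {E : Type*} [NormedAddCommGroup E]

lemma chebR_nonneg (x : E) (B : Set E) : 0 ≤ chebR x B :=
  Real.iSup_nonneg fun _ => norm_nonneg _

lemma chebR_le {x : E} {B : Set E} {r : ℝ} (hr : 0 ≤ r) (h : ∀ b ∈ B, ‖x - b‖ ≤ r) :
    chebR x B ≤ r :=
  Real.iSup_le (fun b => h b b.2) hr

lemma norm_sub_le_chebR (x : E) {B : Set E} (hB : Bornology.IsBounded B) {b : E} (hb : b ∈ B) :
    ‖x - b‖ ≤ chebR x B := by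
  obtain ⟨M, hM⟩ := hB.exists_norm_le
  refine le_ciSup (f := fun c : B => ‖x - c‖) ⟨‖x‖ + M, ?_⟩ ⟨b, hb⟩
  rintro _ ⟨c, rfl⟩
  exact (norm_sub_le _ _).trans (add_le_add_right (hM c c.2) _)

lemma chebR_image {F : Type*} [NormedAddCommGroup F] {f : E → F}
    (hf : ∀ x y, ‖f x - f y‖ = ‖x - y‖) (x : E) (B : Set E) :
    chebR (f x) (f '' B) = chebR x B := by
  have hinj : Function.Injective f := fun x y hxy => by
    simpa [hxy, eq_comm, sub_eq_zero] using hf x y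
  exact ((Equiv.Set.image f B hinj).surjective.iSup_congr _ fun b => hf x b).symm

lemma chebRad_le_chebR {V B : Set E} {v : E} (hv : v ∈ V) : chebRad V B ≤ chebR v B :=
  ciInf_le ⟨0, by rintro _ ⟨w, rfl⟩; exact chebR_nonneg _ _⟩ (⟨v, hv⟩ : V)

lemma chebRad_le_of_forall_exists_chebR_le {F : Type*} [NormedAddCommGroup F]
    {V B : Set E} {W C : Set F} (hW : W.Nonempty)
    (h : ∀ w ∈ W, ∀ ε > 0, ∃ v ∈ V, chebR v B ≤ chebR w C + ε) :
    chebRad V B ≤ chebRad W C := by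
  have : Nonempty W := hW.to_subtype
  refine le_ciInf fun w => le_of_forall_pos_le_add fun ε hε => ?_
  obtain ⟨v, hv, hvw⟩ := h w w.2 ε hε
  exact (chebRad_le_chebR hv).trans hvw

end ChebyshevRadius

lemma apply_eq_zero_of_forall_le_apply {M G : Type*} [AddCommGroup M] [Module ℝ M]
    [FunLike G M ℝ] [LinearMapClass G ℝ M ℝ] (f : G) (p : Submodule ℝ M) {c : ℝ}
    (h : ∀ y ∈ p, c ≤ f y) {y : M} (hy : y ∈ p) : f y = 0 := by
  by_contra hne
  have := h _ (p.smul_mem ((c - 1) / f y) hy)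
  rw [map_smul, smul_eq_mul, div_mul_cancel₀ _ hne] at this
  linarith

section Dual

variable {X : Type*} [NormedAddCommGroup X] [NormedSpace ℝ X]

lemma ContinuousLinearMap.exists_mem_ball_le_apply (g : StrongDual ℝ X) {c ρ R : ℝ}
    (hρ : 0 ≤ ρ) (hρR : ρ < R) (hc : c ≤ ρ * ‖g‖) : ∃ x ∈ ball (0 : X) R, c ≤ g x := by
  have hR : 0 < R := hρ.trans_lt hρR
  rcases (norm_nonneg g).eq_or_lt with hg | hg
  · exact ⟨0, mem_ball_self hR, by simpa [← hg] using hc⟩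
  have hcR : c / R < ‖g‖ := (div_lt_iff₀ hR).2 (by nlinarith)
  obtain ⟨x, hx, hgx⟩ := g.exists_lt_apply_of_lt_opNorm hcR
  obtain ⟨x', hx', hgx'⟩ : ∃ x' : X, ‖x'‖ < 1 ∧ ‖g x‖ = g x' := by
    rcases le_total 0 (g x) with h | h
    · exact ⟨x, hx, Real.norm_of_nonneg h⟩
    · exact ⟨-x, by rwa [norm_neg], by rw [map_neg, Real.norm_of_nonpos h]⟩
  refine ⟨R • x', ?_, ?_⟩
  · rw [mem_ball_zero_iff, norm_smul, Real.norm_of_nonneg hR.le]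
    exact mul_lt_of_lt_one_right hR hx'
  · rw [map_smul, smul_eq_mul, ← hgx']
    exact ((div_lt_iff₀' hR).1 hgx).le

lemma exists_mem_ball_apply_le_of_norm_le {Ψ : StrongDual ℝ (StrongDual ℝ X)}
    (g : StrongDual ℝ X) {ρ R : ℝ} (hΨ : ‖Ψ‖ ≤ ρ) (hρR : ρ < R) :
    ∃ x ∈ ball (0 : X) R, Ψ g ≤ g x :=
  g.exists_mem_ball_le_apply ((norm_nonneg Ψ).trans hΨ) hρR <|
    (Real.le_norm_self _).trans
      ((Ψ.le_opNorm g).trans (mul_le_mul_of_nonneg_right hΨ (norm_nonneg g)))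

lemma norm_inclusionInDoubleDual (x : X) : ‖inclusionInDoubleDual ℝ X x‖ = ‖x‖ :=
  (inclusionInDoubleDualLi ℝ).norm_map x

lemma norm_inclusionInDoubleDual_sub (x y : X) :
    ‖inclusionInDoubleDual ℝ X x - inclusionInDoubleDual ℝ X y‖ = ‖x - y‖ := by
  rw [← map_sub, norm_inclusionInDoubleDual]

lemma mapsTo_inclusionInDoubleDual_inter_closedBall (Y : Submodule ℝ X) :
    MapsTo (inclusionInDoubleDual ℝ X) ((Y : Set X) ∩ closedBall 0 1)
      (biann Y ∩ closedBall 0 1) := fun y ⟨hyY, hy1⟩ =>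
  ⟨fun _ hf => hf y hyY, by
    rw [mem_closedBall_zero_iff (E := StrongDual ℝ (StrongDual ℝ X)), norm_inclusionInDoubleDual]
    exact mem_closedBall_zero_iff.1 hy1⟩

lemma exists_norm_smul_le_one_norm_smul_sub_le {y : X} {δ : ℝ} (hδ : 0 ≤ δ) (hy : ‖y‖ ≤ 1 + δ) :
    ∃ t : ℝ, ‖t • y‖ ≤ 1 ∧ ‖t • y - y‖ ≤ δ := by
  have h1δ : 0 < 1 + δ := by linarith
  set t := (1 + δ)⁻¹
  have ht : t * (1 + δ) = 1 := inv_mul_cancel₀ h1δ.ne'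
  have ht0 : 0 ≤ t := inv_nonneg.2 h1δ.le
  have ht1 : t ≤ 1 := inv_le_one_of_one_le₀ (by linarith)
  refine ⟨t, ?_, ?_⟩
  · rw [norm_smul, Real.norm_of_nonneg ht0]
    nlinarith
  · rw [show t • y - y = (t - 1) • y by rw [sub_smul, one_smul], norm_smul,
      Real.norm_of_nonpos (by linarith)]
    nlinarith

end Dual

section Bidual

variable {X : Type*} [NormedAddCommGroup X] [NormedSpace ℝ X] (Y : Submodule ℝ X)

theorem exists_mem_forall_norm_sub_lt_of_mem_biann {ι : Type*} [Finite ι] (a : ι → X) (ρ : ι → ℝ)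
    {Φ : StrongDual ℝ (StrongDual ℝ X)} (hΦ : Φ ∈ biann Y)
    (hΦa : ∀ i, ‖Φ - inclusionInDoubleDual ℝ X (a i)‖ ≤ ρ i) {ε : ℝ} (hε : 0 < ε) :
    ∃ y ∈ Y, ∀ i, ‖y - a i‖ < ρ i + ε := by
  classical
  cases nonempty_fintype ι
  by_contra! hY
  set S : Set (ι → X) := univ.pi fun i => ball 0 (ρ i + ε)
  set C : Set (ι → X) := (fun y => (fun _ => y) - a) '' Y
  have hC : Convex ℝ C := by
    have := (Y.convex.linear_image (LinearMap.pi fun _ : ι => LinearMap.id)).translate (-a)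
    rw [image_image] at this
    simp only [neg_add_eq_sub] at this
    exact this
  have hSC : Disjoint S C := by
    rw [disjoint_right]
    rintro _ ⟨y, hy, rfl⟩ hyS
    obtain ⟨i, hi⟩ := hY y hy
    exact hi.not_gt (mem_ball_zero_iff.1 (hyS i (mem_univ i)))
  obtain ⟨φ, u, hφS, hφC⟩ := geometric_hahn_banach_open
    (convex_pi fun _ _ => convex_ball _ _) (isOpen_set_pi finite_univ fun _ _ => isOpen_ball) hC hSC
  set g : ι → StrongDual ℝ X := fun i => φ.comp (.single ℝ (fun _ => X) i)
  have hφ : ∀ v, φ v = ∑ i, g i (v i) := fun v => (φ.sum_comp_single ℝ (fun _ => X) v).symm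
  have hφY : ∀ y ∈ Y, u + φ a ≤ (∑ i, g i) y := fun y hy => by
    have := hφC _ ⟨y, hy, rfl⟩
    rw [map_sub, hφ (fun _ => y)] at this
    rw [sum_apply]
    linarith
  have hΦg : Φ (∑ i, g i) = 0 := hΦ _ fun y hy => apply_eq_zero_of_forall_le_apply _ Y hφY hy
  have hu : u ≤ ∑ i, (Φ - inclusionInDoubleDual ℝ X (a i)) (g i) := by
    have h0 := hφY 0 Y.zero_mem
    simp only [sub_apply, dual_def, Finset.sum_sub_distrib, ← map_sum, hΦg,
      ← hφ, map_zero] at h0 ⊢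
    linarith
  choose x hx hgx using fun i =>
    exists_mem_ball_apply_le_of_norm_le (g i) (hΦa i) (lt_add_of_pos_right _ hε)
  have hxS : φ x < u := hφS x fun i _ => hx i
  rw [hφ] at hxS
  exact hxS.not_ge (hu.trans (Finset.sum_le_sum fun i _ => hgx i))

theorem exists_mem_forall_norm_sub_le_of_mem_biann {s : Set X} (hs : s.Finite)
    {Φ : StrongDual ℝ (StrongDual ℝ X)} (hΦ : Φ ∈ biann Y) (hΦ1 : ‖Φ‖ ≤ 1) {r : ℝ}
    (hΦs : ∀ x ∈ s, ‖Φ - inclusionInDoubleDual ℝ X x‖ ≤ r) {ε : ℝ} (hε : 0 < ε) :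
    ∃ y ∈ Y, ‖y‖ ≤ 1 ∧ ∀ x ∈ s, ‖y - x‖ ≤ r + ε := by
  have := hs.to_subtype
  have hΦ0 : ‖Φ - inclusionInDoubleDual ℝ X 0‖ ≤ 1 := by
    rwa [map_zero, sub_zero (G := StrongDual ℝ (StrongDual ℝ X))]
  -- the extra index `none` stands for the unit ball around `0`
  obtain ⟨y, hyY, hy⟩ := exists_mem_forall_norm_sub_lt_of_mem_biann Y
    (fun o : Option s => o.elim 0 (↑)) (fun o => o.elim 1 fun _ => r) hΦ
    (Option.rec hΦ0 fun x => hΦs x x.2) (half_pos hε)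
  obtain ⟨t, ht1, hty⟩ :=
    exists_norm_smul_le_one_norm_smul_sub_le (half_pos hε).le (by simpa using (hy none).le)
  refine ⟨t • y, Y.smul_mem t hyY, ht1, fun x hx => ?_⟩
  calc ‖t • y - x‖ ≤ ‖t • y - y‖ + ‖y - x‖ := norm_sub_le_norm_sub_add_norm_sub _ _ _
    _ ≤ ε / 2 + (r + ε / 2) := add_le_add hty (hy (some ⟨x, hx⟩)).le
    _ = r + ε := by ring

theorem exists_mem_chebR_le_of_mem_biann {F : Set X} (hF : TotallyBounded F)
    {Φ : StrongDual ℝ (StrongDual ℝ X)} (hΦ : Φ ∈ biann Y) (hΦ1 : ‖Φ‖ ≤ 1) {ε : ℝ} (hε : 0 < ε) :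
    ∃ y ∈ Y, ‖y‖ ≤ 1 ∧ chebR y F ≤ chebR Φ (inclusionInDoubleDual ℝ X '' F) + ε := by
  set r := chebR Φ (inclusionInDoubleDual ℝ X '' F)
  obtain ⟨s, hsF, hs, hFs⟩ := finite_approx_of_totallyBounded hF (ε / 2) (half_pos hε)
  have hJF : Bornology.IsBounded (inclusionInDoubleDual ℝ X '' F) :=
    (inclusionInDoubleDualLi ℝ).isometry.lipschitz.isBounded_image hF.isBounded
  obtain ⟨y, hyY, hy1, hys⟩ := exists_mem_forall_norm_sub_le_of_mem_biann Y hs hΦ hΦ1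
    (fun x hx => norm_sub_le_chebR Φ hJF (mem_image_of_mem _ (hsF hx))) (half_pos hε)
  refine ⟨y, hyY, hy1, chebR_le (add_nonneg (chebR_nonneg _ _) hε.le) fun b hb => ?_⟩
  obtain ⟨x, hx, hbx⟩ := mem_iUnion₂.1 (hFs hb)
  calc ‖y - b‖ ≤ ‖y - x‖ + ‖x - b‖ := norm_sub_le_norm_sub_add_norm_sub _ _ _
    _ ≤ r + ε / 2 + ε / 2 :=
      add_le_add (hys x hx) (by rw [← dist_eq_norm']; exact (mem_ball.1 hbx).le)
    _ = r + ε := by ring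

end Bidual

open NormedSpace in
theorem stmt_9_general {X : Type*} [NormedAddCommGroup X] [NormedSpace ℝ X]
    (Y : Submodule ℝ X)
    (F : Set X) (hFcp : IsCompact F) :
    chebRad (biann Y ∩ closedBall 0 1) (inclusionInDoubleDual ℝ X '' F)
      = chebRad ((Y : Set X) ∩ closedBall 0 1) F := by
  apply le_antisymm
  · refine chebRad_le_of_forall_exists_chebR_le ⟨0, Y.zero_mem, mem_closedBall_self zero_le_one⟩
      fun y hy ε hε => ⟨_, mapsTo_inclusionInDoubleDual_inter_closedBall Y hy, ?_⟩
    rw [chebR_image norm_inclusionInDoubleDual_sub]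
    linarith
  · refine chebRad_le_of_forall_exists_chebR_le ⟨0, fun _ _ => rfl, mem_closedBall_self zero_le_one⟩
      fun Φ ⟨hΦY, hΦ1⟩ ε hε => ?_
    obtain ⟨y, hyY, hy1, hy⟩ := exists_mem_chebR_le_of_mem_biann Y hFcp.totallyBounded hΦY
      ((mem_closedBall_zero_iff (E := StrongDual ℝ (StrongDual ℝ X))).1 hΦ1) hε
    exact ⟨y, ⟨hyY, mem_closedBall_zero_iff.2 hy1⟩, hy⟩

open NormedSpace in
/-- for compact `F ⊆ X`, `rad_{B_{Y⊥⊥}}(F) = rad_{B_Y}(F)`. -/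
theorem stmt_9 {X : Type*} [NormedAddCommGroup X] [NormedSpace ℝ X] [CompleteSpace X]
    (Y : Submodule ℝ X) (hYc : IsClosed (Y : Set X))
    (F : Set X) (hFne : F.Nonempty) (hFcp : IsCompact F) :
    chebRad (biann Y ∩ closedBall 0 1) (inclusionInDoubleDual ℝ X '' F)
      = chebRad ((Y : Set X) ∩ closedBall 0 1) F :=
  stmt_9_general Y F hFcp
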